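/- arXiv:1011.0454 — 3 statements merged into one kernel-verified Lean document; each statement's English description precedes it below -/
import Mathlib

section
/- In S = K[X_1,Y_1,Z_1,...,X_N,Y_N,Z_N] with derivation Δ(Z_i)=Y_i, Δ(Y_i)=X_i, Δ(X_i)=0, for i < j the element G_{{i,j}} = X_i Z_j - Y_i Y_j + Z_i X_j satisfies Δ(G_{{i,j}}) = 0, and for i < j < k the element G_{{i,j,k}} = det of the matrix with rows (X_i,Y_i,Z_i),(X_j,Y_j,Z_j),(X_k,Y_k,Z_k) satisfies Δ(G_{{i,j,k}}) = 0. -/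
/-!
Both elements are built from Jordan chains `Zᵢ ↦ Yᵢ ↦ Xᵢ ↦ 0` of `Δ`. The bilinear form
`XᵢZⱼ - YᵢYⱼ + ZᵢXⱼ` is killed by `Δ` because the Leibniz terms cancel in pairs. For the
determinant, `Δ` acts column by column: it sends the column of the `X`'s to `0` and every other
column to its predecessor, so each term of `Δ (det M)` is a determinant with a zero or a
repeated column.
-/

open Finset

namespace Derivation

variable {R A : Type*} [CommRing R] [CommRing A] [Algebra R A] (D : Derivation R A A)

theorem leibniz_prod {ι : Type*} [DecidableEq ι] (s : Finset ι) (f : ι → A) :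
    D (∏ i ∈ s, f i) = ∑ i ∈ s, ∏ j ∈ s, Function.update f i (D (f i)) j := by
  induction s using Finset.induction_on with
  | empty => simp
  | insert a s ha ih =>
    rw [prod_insert ha, sum_insert ha, leibniz, ih, smul_eq_mul, smul_eq_mul, mul_sum,
      prod_insert ha, Function.update_self, prod_congr rfl fun j hj =>
        Function.update_of_ne (ne_of_mem_of_not_mem hj ha) _ _, mul_comm, add_comm]
    congr 1
    refine sum_congr rfl fun i hi => ?_
    rw [prod_insert ha, Function.update_of_ne (ne_of_mem_of_not_mem hi ha).symm]

theorem apply_det {n : Type*} [Fintype n] [DecidableEq n] (M : Matrix n n A) :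
    D M.det = ∑ c, (M.updateCol c fun r => D (M r c)).det := by
  simp only [Matrix.det_apply, map_sum, Units.smul_def, map_zsmul, leibniz_prod]
  rw [sum_comm]
  refine sum_congr rfl fun σ _ => ?_
  rw [smul_sum]
  refine sum_congr rfl fun c _ => ?_
  congr 1
  refine prod_congr rfl fun j _ => ?_
  rcases eq_or_ne j c with rfl | hjc
  · simp
  · simp [hjc]

/-- `v m ↦ v (m - 1) ↦ ⋯ ↦ v 0 ↦ 0` under `D`: a Jordan chain of `D` for the eigenvalue `0`. -/
def IsJordanChain {m : ℕ} (v : Fin (m + 1) → A) : Prop :=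
  D (v 0) = 0 ∧ ∀ c : Fin m, D (v c.succ) = v c.castSucc

theorem apply_det_eq_zero_of_isJordanChain {m : ℕ} (M : Matrix (Fin (m + 1)) (Fin (m + 1)) A)
    (hM : ∀ r, D.IsJordanChain (M r)) : D M.det = 0 := by
  rw [apply_det]
  refine sum_eq_zero fun c _ => ?_
  induction c using Fin.cases with
  | zero =>
    simp only [(hM _).1]
    exact Matrix.det_eq_zero_of_column_eq_zero 0 fun r => by simp
  | succ c =>
    simp only [(hM _).2]
    exact Matrix.det_updateCol_eq_zero (Fin.castSucc_lt_succ (i := c)).ne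

theorem apply_jordanChain_pairing_eq_zero {v w : Fin 3 → A} (hv : D.IsJordanChain v)
    (hw : D.IsJordanChain w) :
    D (v 0 * w 2 - v 1 * w 1 + v 2 * w 0) = 0 := by
  have hv1 : D (v 1) = v 0 := hv.2 0
  have hv2 : D (v 2) = v 1 := hv.2 1
  have hw1 : D (w 1) = w 0 := hw.2 0
  have hw2 : D (w 2) = w 1 := hw.2 1
  simp only [map_add, map_sub, leibniz, hv.1, hw.1, hv1, hv2, hw1, hw2, smul_eq_mul]
  ring

end Derivation

open MvPolynomial in
theorem G_constants_general (K : Type) [Field K] (N : ℕ)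
    (D : Derivation K (MvPolynomial (Fin N × Fin 3) K) (MvPolynomial (Fin N × Fin 3) K))
    (hx : ∀ i : Fin N, D (MvPolynomial.X (i, 0)) = 0)
    (hy : ∀ i : Fin N, D (MvPolynomial.X (i, 1)) = MvPolynomial.X (i, 0))
    (hz : ∀ i : Fin N, D (MvPolynomial.X (i, 2)) = MvPolynomial.X (i, 1)) :
    (∀ i j : Fin N, i < j →
      D (MvPolynomial.X (i, 0) * MvPolynomial.X (j, 2)
          - MvPolynomial.X (i, 1) * MvPolynomial.X (j, 1)
          + MvPolynomial.X (i, 2) * MvPolynomial.X (j, 0)) = 0) ∧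
    (∀ i j k : Fin N, i < j → j < k →
      D (Matrix.det !![MvPolynomial.X (i, 0), MvPolynomial.X (i, 1), MvPolynomial.X (i, 2);
                       MvPolynomial.X (j, 0), MvPolynomial.X (j, 1), MvPolynomial.X (j, 2);
                       MvPolynomial.X (k, 0), MvPolynomial.X (k, 1), MvPolynomial.X (k, 2)]) = 0) := by
  have hchain (i : Fin N) : D.IsJordanChain fun c => X (i, c) := by
    refine ⟨hx i, Fin.forall_fin_two.2 ⟨?_, ?_⟩⟩
    exacts [hy i, hz i]
  constructor
  · exact fun i j _ => (D.apply_jordanChain_pairing_eq_zero (hchain i) (hchain j) :)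
  · intro i j k _ _
    have h := D.apply_det_eq_zero_of_isJordanChain (Matrix.of fun r c => X (![i, j, k] r, c))
      fun r => hchain _
    rwa [Matrix.eta_fin_three (Matrix.of _)] at h

/-- In S = K[X₁,Y₁,Z₁,…,X_N,Y_N,Z_N] with Δ(Zᵢ)=Yᵢ, Δ(Yᵢ)=Xᵢ, Δ(Xᵢ)=0,
for i < j the element G_{i,j} = XᵢZⱼ - YᵢYⱼ + ZᵢXⱼ is a Δ-constant, and for i < j < k
the 3×3 determinant G_{i,j,k} is a Δ-constant.
Variables: X (i,0) = Xᵢ, X (i,1) = Yᵢ, X (i,2) = Zᵢ. -/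
theorem G_constants (K : Type) [Field K] [CharZero K] (N : ℕ)
    (D : Derivation K (MvPolynomial (Fin N × Fin 3) K) (MvPolynomial (Fin N × Fin 3) K))
    (hx : ∀ i : Fin N, D (MvPolynomial.X (i, 0)) = 0)
    (hy : ∀ i : Fin N, D (MvPolynomial.X (i, 1)) = MvPolynomial.X (i, 0))
    (hz : ∀ i : Fin N, D (MvPolynomial.X (i, 2)) = MvPolynomial.X (i, 1)) :
    (∀ i j : Fin N, i < j →
      D (MvPolynomial.X (i, 0) * MvPolynomial.X (j, 2)
          - MvPolynomial.X (i, 1) * MvPolynomial.X (j, 1)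
          + MvPolynomial.X (i, 2) * MvPolynomial.X (j, 0)) = 0) ∧
    (∀ i j k : Fin N, i < j → j < k →
      D (Matrix.det !![MvPolynomial.X (i, 0), MvPolynomial.X (i, 1), MvPolynomial.X (i, 2);
                       MvPolynomial.X (j, 0), MvPolynomial.X (j, 1), MvPolynomial.X (j, 2);
                       MvPolynomial.X (k, 0), MvPolynomial.X (k, 1), MvPolynomial.X (k, 2)]) = 0) :=
  G_constants_general K N D hx hy hz
end

section
/- Define F_{{i}} = X_i, F_{{i,j}} = X_i Y_j - X_j Y_i, G_{{i,j}} = X_i Z_j - Y_i Y_j + Z_i X_j, G_{{i,j,k}} the 3×3 determinant, and inductively for t ≥ 3 and i_1 < i_2 < ... < i_t, F_{{i_1,...,i_t}} = F_{{i_2,i_4,i_5,...,i_t}} G_{{i_1,i_3}} - F_{{i_1,i_4,i_5,...,i_t}} G_{{i_2,i_3}}, and similarly for G with t ≥ 4. Then Δ(F_I) = 0 and Δ(G_I) = 0 for all such index sets I. -/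
/-!
The kernel of a derivation is closed under sums and products. A direct computation shows that
`Δ` kills `Xᵢ`, `F_{i,j}`, `G_{i,j}` and `G_{i,j,k}`, and the recursions write every longer `F_I`
and `G_I` as `A * G_{i₁,i₃} - B * G_{i₂,i₃}` with `A`, `B` shorter members of the same family, so
induction on the length of `I` finishes the proof.
-/

variable (K : Type) [Field K] (N : ℕ)

/-- Xᵢ in S = K[X₁,Y₁,Z₁,…]: the variable X (i,0). -/
noncomputable def XX (i : Fin N) : MvPolynomial (Fin N × Fin 3) K := MvPolynomial.X (i, 0)
/-- Yᵢ: the variable X (i,1). -/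
noncomputable def YY (i : Fin N) : MvPolynomial (Fin N × Fin 3) K := MvPolynomial.X (i, 1)
/-- Zᵢ: the variable X (i,2). -/
noncomputable def ZZ (i : Fin N) : MvPolynomial (Fin N × Fin 3) K := MvPolynomial.X (i, 2)

/-- G_{i,j} = XᵢZⱼ - YᵢYⱼ + ZᵢXⱼ. -/
noncomputable def Gpair (i j : Fin N) : MvPolynomial (Fin N × Fin 3) K :=
  XX K N i * ZZ K N j - YY K N i * YY K N j + ZZ K N i * XX K N j

/-- The family F_I, indexed by (sorted) lists: F_{i}=Xᵢ, F_{i,j}=XᵢYⱼ-XⱼYᵢ, and for t ≥ 3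
F_{i₁,…,i_t} = F_{i₂,i₄,…,i_t} G_{i₁,i₃} - F_{i₁,i₄,…,i_t} G_{i₂,i₃}. -/
noncomputable def FF : List (Fin N) → MvPolynomial (Fin N × Fin 3) K
  | [] => 0
  | [i] => XX K N i
  | [i, j] => XX K N i * YY K N j - XX K N j * YY K N i
  | i1 :: i2 :: i3 :: rest =>
      FF (i2 :: rest) * Gpair K N i1 i3 - FF (i1 :: rest) * Gpair K N i2 i3
termination_by l => l.length

/-- The family G_I: G_{i,j} as above, G_{i,j,k} the 3×3 determinant, and for t ≥ 4
G_{i₁,…,i_t} = G_{i₂,i₄,…,i_t} G_{i₁,i₃} - G_{i₁,i₄,…,i_t} G_{i₂,i₃}. -/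
noncomputable def GG : List (Fin N) → MvPolynomial (Fin N × Fin 3) K
  | [] => 0
  | [_] => 0
  | [i, j] => Gpair K N i j
  | [i, j, k] =>
      Matrix.det !![XX K N i, YY K N i, ZZ K N i;
                    XX K N j, YY K N j, ZZ K N j;
                    XX K N k, YY K N k, ZZ K N k]
  | i1 :: i2 :: i3 :: i4 :: rest =>
      GG (i2 :: i4 :: rest) * Gpair K N i1 i3 - GG (i1 :: i4 :: rest) * Gpair K N i2 i3
termination_by l => l.length

theorem Derivation.map_mul_sub_mul_eq_zero {R A M : Type*} [CommSemiring R] [CommRing A]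
    [Algebra R A] [AddCommGroup M] [Module A M] [Module R M] (D : Derivation R A M) {a b c d : A}
    (ha : D a = 0) (hb : D b = 0) (hc : D c = 0) (hd : D d = 0) : D (a * b - c * d) = 0 := by
  simp [Derivation.leibniz, ha, hb, hc, hd]

section

variable {K N}

structure IsWeitzenbock (D : Derivation K (MvPolynomial (Fin N × Fin 3) K)
    (MvPolynomial (Fin N × Fin 3) K)) : Prop where
  map_XX : ∀ i, D (XX K N i) = 0
  map_YY : ∀ i, D (YY K N i) = XX K N i
  map_ZZ : ∀ i, D (ZZ K N i) = YY K N i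

variable {D : Derivation K (MvPolynomial (Fin N × Fin 3) K) (MvPolynomial (Fin N × Fin 3) K)}

namespace IsWeitzenbock

theorem map_Gpair (hD : IsWeitzenbock D) (i j : Fin N) : D (Gpair K N i j) = 0 := by
  simp only [Gpair, map_add, map_sub, Derivation.leibniz, smul_eq_mul, hD.map_XX, hD.map_YY,
    hD.map_ZZ]
  ring

theorem map_FF (hD : IsWeitzenbock D) : ∀ l : List (Fin N), D (FF K N l) = 0
  | [] => by simp [FF]
  | [i] => by simp [FF, hD.map_XX]
  | [i, j] => by
      simp only [FF, map_sub, Derivation.leibniz, smul_eq_mul, hD.map_XX, hD.map_YY]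
      ring
  | i1 :: i2 :: i3 :: rest => by
      rw [FF]
      exact D.map_mul_sub_mul_eq_zero (hD.map_FF (i2 :: rest)) (hD.map_Gpair i1 i3)
        (hD.map_FF (i1 :: rest)) (hD.map_Gpair i2 i3)
termination_by l => l.length

theorem map_GG (hD : IsWeitzenbock D) : ∀ l : List (Fin N), D (GG K N l) = 0
  | [] => by simp [GG]
  | [_] => by simp [GG]
  | [i, j] => by
      rw [GG]
      exact hD.map_Gpair i j
  | [i, j, k] => by
      rw [GG, Matrix.det_fin_three]
      simp only [Matrix.of_apply, Matrix.cons_val', Matrix.cons_val_zero, Matrix.cons_val_one,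
        Matrix.cons_val, Matrix.cons_val_fin_one, map_add, map_sub, Derivation.leibniz, smul_eq_mul,
        hD.map_XX, hD.map_YY, hD.map_ZZ]
      ring
  | i1 :: i2 :: i3 :: i4 :: rest => by
      rw [GG]
      exact D.map_mul_sub_mul_eq_zero (hD.map_GG (i2 :: i4 :: rest)) (hD.map_Gpair i1 i3)
        (hD.map_GG (i1 :: i4 :: rest)) (hD.map_Gpair i2 i3)
termination_by l => l.length

end IsWeitzenbock

end

theorem FF_GG_constants_general (K : Type) [Field K] (N : ℕ)
    (D : Derivation K (MvPolynomial (Fin N × Fin 3) K) (MvPolynomial (Fin N × Fin 3) K))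
    (hx : ∀ i : Fin N, D (XX K N i) = 0)
    (hy : ∀ i : Fin N, D (YY K N i) = XX K N i)
    (hz : ∀ i : Fin N, D (ZZ K N i) = YY K N i) :
    (∀ l : List (Fin N), l.Chain' (· < ·) → l ≠ [] → D (FF K N l) = 0) ∧
    (∀ l : List (Fin N), l.Chain' (· < ·) → 2 ≤ l.length → D (GG K N l) = 0) := by
  have hD : IsWeitzenbock D := ⟨hx, hy, hz⟩
  exact ⟨fun l _ _ => hD.map_FF l, fun l _ _ => hD.map_GG l⟩

/-- Δ(F_I) = 0 and Δ(G_I) = 0 for all sorted index sets I (with Δ the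
Weitzenböck derivation Δ(Zᵢ)=Yᵢ, Δ(Yᵢ)=Xᵢ, Δ(Xᵢ)=0). -/
theorem FF_GG_constants (K : Type) [Field K] [CharZero K] (N : ℕ)
    (D : Derivation K (MvPolynomial (Fin N × Fin 3) K) (MvPolynomial (Fin N × Fin 3) K))
    (hx : ∀ i : Fin N, D (XX K N i) = 0)
    (hy : ∀ i : Fin N, D (YY K N i) = XX K N i)
    (hz : ∀ i : Fin N, D (ZZ K N i) = YY K N i) :
    (∀ l : List (Fin N), l.Chain' (· < ·) → l ≠ [] → D (FF K N l) = 0) ∧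
    (∀ l : List (Fin N), l.Chain' (· < ·) → 2 ≤ l.length → D (GG K N l) = 0) :=
  FF_GG_constants_general K N D hx hy hz
end

section
/- With the lexicographic monomial order determined by Z_N > Y_N > X_N > Z_{N-1} > ... > Z_1 > Y_1 > X_1, for 1 ≤ i_1 < i_2 < ... < i_t ≤ N with t ≥ 2, the leading monomial of F_{{i_1,...,i_t}} is X_{i_1} Y_{i_2} Y_{i_3} ··· Y_{i_t}, and more precisely F_{{i_1,...,i_t}} = X_{i_1} Y_{i_2} ··· Y_{i_t} - Y_{i_1} X_{i_2} Y_{i_3} ··· Y_{i_t} + (lower order terms). -/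
variable (K : Type) [Field K] (N : ℕ)

/-- Rank of a variable in the order Z_N > Y_N > X_N > ⋯ > Z₁ > Y₁ > X₁:
higher rank = larger variable (coordinate 0 = X, 1 = Y, 2 = Z). -/
def rankVar {N : ℕ} (v : Fin N × Fin 3) : ℕ := 3 * (v.1 : ℕ) + (v.2 : ℕ)

/-- Lexicographic comparison of monomials (exponent vectors) for this variable order:
m is lower order than m' iff at the largest variable where they differ, m has the
smaller exponent. -/
def monLT {N : ℕ} (m m' : (Fin N × Fin 3) →₀ ℕ) : Prop :=
  ∃ v : Fin N × Fin 3, m v < m' v ∧ ∀ w : Fin N × Fin 3, rankVar v < rankVar w → m w = m' w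

/-- The exponent vector of the monomial Y_{i₁} ⋯ Y_{i_t} for a list of indices. -/
noncomputable def Ymon {N : ℕ} (l : List (Fin N)) : (Fin N × Fin 3) →₀ ℕ :=
  (l.map (fun i => Finsupp.single ((i, 1) : Fin N × Fin 3) 1)).sum

/-!
Write `F_{a,c,r} = F_{a,c} Y_r + q`; by induction on `r`, every monomial of `q` is lex-below
`Y_a X_c Y_r`. For `r = b :: r'` the recursion, together with the identity
`X_c G_{a,b} - X_a G_{c,b} = F_{a,c} Y_b + X_b (X_c Z_a - X_a Z_c)`, writes `q` as a sum of
products `p · m` where `p` only involves variables below `Y_x` for `x = b`, or for `x = d` when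
`r' = d :: r''`, and `m` is either the `Y`-monomial of the part of `r` after `x` or, by induction,
below `Y_c X_d Y_{r''}` or `Y_a X_d Y_{r''}`. Such a product is compared with `Y_a X_c Y_r` at
`Y_x` or above, where `p` plays no role, and so lies below it.
-/

section MonomialOrder

open Finsupp

variable {N}

lemma rankVar_injective : Function.Injective (rankVar (N := N)) := by
  rintro ⟨i, s⟩ ⟨j, t⟩ h
  have := s.isLt; have := t.isLt
  simp only [rankVar] at h
  exact Prod.ext (Fin.ext (show (i : ℕ) = j by omega)) (Fin.ext (show (s : ℕ) = t by omega))

lemma rankVar_lt_of_fst_lt {i j : Fin N} (h : i < j) (s t : Fin 3) :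
    rankVar (i, s) < rankVar (j, t) := by
  have := s.isLt; simp only [rankVar]; omega

lemma rankVar_fst_lt_snd (i : Fin N) : rankVar (i, 0) < rankVar (i, 1) := by
  simp [rankVar]

lemma monLT_asymm {m m' : (Fin N × Fin 3) →₀ ℕ} (h : monLT m m') : ¬ monLT m' m := by
  obtain ⟨v, hv, hv_above⟩ := h
  rintro ⟨u, hu, hu_above⟩
  rcases lt_trichotomy (rankVar v) (rankVar u) with hvu | hvu | hvu
  · exact hu.ne (hv_above u hvu).symm
  · cases rankVar_injective hvu
    exact lt_asymm hv hu
  · exact hv.ne (hu_above v hvu).symm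

def lowVars (k : ℕ) : Set (Fin N × Fin 3) := {w | rankVar w < k}

lemma single_mem_supported_lowVars {i j : Fin N} (h : i < j) (s t : Fin 3) :
    single (i, s) 1 ∈ supported ℕ ℕ (lowVars (rankVar (j, t))) :=
  single_mem_supported ℕ 1 (rankVar_lt_of_fst_lt h s t)

lemma apply_eq_zero_of_mem_supported_lowVars {k : ℕ} {m : (Fin N × Fin 3) →₀ ℕ}
    (hm : m ∈ supported ℕ ℕ (lowVars k)) {w : Fin N × Fin 3} (hw : k ≤ rankVar w) : m w = 0 :=
  (mem_supported' ℕ m).mp hm w (not_lt.mpr hw)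

variable {v : Fin N × Fin 3} {n L L₀ : (Fin N × Fin 3) →₀ ℕ}

lemma monLT_add_single_add (hn : n ∈ supported ℕ ℕ (lowVars (rankVar v)))
    (hL : L ∈ supported ℕ ℕ (lowVars (rankVar v))) (U : (Fin N × Fin 3) →₀ ℕ) :
    monLT (n + U) (L + (single v 1 + U)) := by
  refine ⟨v, ?_, fun w hw => ?_⟩
  · simp [apply_eq_zero_of_mem_supported_lowVars hn le_rfl,
      apply_eq_zero_of_mem_supported_lowVars hL le_rfl]
  · have hvw : w ≠ v := fun h => hw.ne' (congrArg rankVar h)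
    simp [apply_eq_zero_of_mem_supported_lowVars hn hw.le,
      apply_eq_zero_of_mem_supported_lowVars hL hw.le, single_eq_of_ne hvw]

lemma monLT_add_of_monLT {m U : (Fin N × Fin 3) →₀ ℕ} (hm : monLT m (L₀ + U))
    (hn : n ∈ supported ℕ ℕ (lowVars (rankVar v)))
    (hL₀ : L₀ ∈ supported ℕ ℕ (lowVars (rankVar v)))
    (hL : L ∈ supported ℕ ℕ (lowVars (rankVar v))) :
    monLT (m + n) (L + (single v 1 + U)) := by
  obtain ⟨u, hu, hu_above⟩ := hm
  have low {x : (Fin N × Fin 3) →₀ ℕ} (hx : x ∈ supported ℕ ℕ (lowVars (rankVar v)))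
      {w : Fin N × Fin 3} (hw : rankVar v ≤ rankVar w) : x w = 0 :=
    apply_eq_zero_of_mem_supported_lowVars hx hw
  have single_above {w : Fin N × Fin 3} (hw : rankVar v < rankVar w) : single v 1 w = 0 :=
    single_eq_of_ne fun h => hw.ne' (congrArg rankVar h)
  by_cases hvu : rankVar v < rankVar u
  · refine ⟨u, ?_, fun w hw => ?_⟩
    · simpa [low hn hvu.le, low hL₀ hvu.le, low hL hvu.le, single_above hvu] using hu
    · have hvw := hvu.trans hw
      simpa [low hn hvw.le, low hL₀ hvw.le, low hL hvw.le, single_above hvw] using hu_above w hw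
  · refine ⟨v, ?_, fun w hw => ?_⟩
    · have hmv : m v ≤ U v := by
        rcases (not_lt.mp hvu).lt_or_eq with huv | huv
        · simpa [low hL₀ le_rfl] using (hu_above v huv).le
        · cases rankVar_injective huv
          simpa [low hL₀ le_rfl] using hu.le
      simp only [Finsupp.add_apply, single_eq_same, low hn le_rfl, low hL le_rfl]
      omega
    · have huw := (not_lt.mp hvu).trans_lt hw
      simpa [low hn hw.le, low hL₀ hw.le, low hL hw.le, single_above hw] using hu_above w huw

lemma monLT_pair_add {a c : Fin N} (hac : a < c) (U : (Fin N × Fin 3) →₀ ℕ) :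
    monLT (single (a, 1) 1 + single (c, 0) 1 + U) (single (a, 0) 1 + single (c, 1) 1 + U) := by
  rw [add_assoc (single (a, 0) 1)]
  exact monLT_add_single_add (add_mem (single_mem_supported_lowVars hac _ _)
    (single_mem_supported ℕ 1 (rankVar_fst_lt_snd c))) (single_mem_supported_lowVars hac _ _) U

end MonomialOrder

open MvPolynomial

section MonomialsLT

variable {R : Type*} [CommRing R] {N}

def MonomialsLT (p : MvPolynomial (Fin N × Fin 3) R) (M : (Fin N × Fin 3) →₀ ℕ) : Prop :=
  ∀ m ∈ p.support, monLT m M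

variable {p q : MvPolynomial (Fin N × Fin 3) R} {M : (Fin N × Fin 3) →₀ ℕ}

lemma MonomialsLT.add (hp : MonomialsLT p M) (hq : MonomialsLT q M) : MonomialsLT (p + q) M :=
  fun m hm => (Finset.mem_union.mp (support_add hm)).elim (hp m) (hq m)

lemma MonomialsLT.sub (hp : MonomialsLT p M) (hq : MonomialsLT q M) : MonomialsLT (p - q) M := by
  classical
  exact fun m hm => (Finset.mem_union.mp (support_sub _ p q hm)).elim (hp m) (hq m)

lemma MonomialsLT.mul_of_forall (h : ∀ d ∈ p.support, ∀ e ∈ q.support, monLT (d + e) M) :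
    MonomialsLT (p * q) M := by
  classical
  intro m hm
  obtain ⟨d, hd, e, he, rfl⟩ := Finset.mem_add.mp (support_mul p q hm)
  exact h d hd e he

lemma mem_supported_of_mem_support {s : Set (Fin N × Fin 3)} (hp : p ∈ supported R s)
    {d : (Fin N × Fin 3) →₀ ℕ} (hd : d ∈ p.support) : d ∈ Finsupp.supported ℕ ℕ s :=
  fun i hi => mem_supported.mp hp ((mem_vars_iff_mem_support i).mpr ⟨d, hd, hi⟩)

variable {v : Fin N × Fin 3} {L L₀ : (Fin N × Fin 3) →₀ ℕ}

lemma monomialsLT_mul_monomial (hp : p ∈ supported R (lowVars (rankVar v)))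
    (hL : L ∈ Finsupp.supported ℕ ℕ (lowVars (rankVar v))) (U : (Fin N × Fin 3) →₀ ℕ) (c : R) :
    MonomialsLT (p * monomial U c) (L + (Finsupp.single v 1 + U)) :=
  MonomialsLT.mul_of_forall fun _ hd _ he => by
    rw [Finset.mem_singleton.mp (support_monomial_subset he)]
    exact monLT_add_single_add (mem_supported_of_mem_support hp hd) hL U

lemma MonomialsLT.mul_of_mem_supported {U : (Fin N × Fin 3) →₀ ℕ} (hq : MonomialsLT q (L₀ + U))
    (hp : p ∈ supported R (lowVars (rankVar v)))
    (hL₀ : L₀ ∈ Finsupp.supported ℕ ℕ (lowVars (rankVar v)))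
    (hL : L ∈ Finsupp.supported ℕ ℕ (lowVars (rankVar v))) :
    MonomialsLT (q * p) (L + (Finsupp.single v 1 + U)) :=
  MonomialsLT.mul_of_forall fun _ hd _ he =>
    monLT_add_of_monLT (hq _ hd) (mem_supported_of_mem_support hp he) hL₀ hL

theorem coeff_of_eq_monomial_sub_monomial_add {f : MvPolynomial (Fin N × Fin 3) R}
    {m₁ m₂ : (Fin N × Fin 3) →₀ ℕ} (hf : f = monomial m₁ 1 - monomial m₂ 1 + q)
    (h₂₁ : monLT m₂ m₁) (hq : MonomialsLT q m₂) :
    coeff m₁ f = 1 ∧ coeff m₂ f = -1 ∧ ∀ m ∈ f.support, m ≠ m₁ → m ≠ m₂ → monLT m m₂ := by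
  have hq₁ : coeff m₁ q = 0 := notMem_support_iff.mp fun h => monLT_asymm h₂₁ (hq _ h)
  have hq₂ : coeff m₂ q = 0 := notMem_support_iff.mp fun h => monLT_asymm (hq _ h) (hq _ h)
  have h₁₂ : m₁ ≠ m₂ := fun h => monLT_asymm h₂₁ (h ▸ h₂₁)
  subst hf
  refine ⟨by simp [coeff_monomial, h₁₂.symm, hq₁], by simp [coeff_monomial, h₁₂, hq₂],
    fun m hm hm₁ hm₂ => hq m ?_⟩
  simpa [coeff_monomial, Ne.symm hm₁, Ne.symm hm₂] using hm

end MonomialsLT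

section FF

variable {K N}

lemma Ymon_cons (i : Fin N) (l : List (Fin N)) :
    Ymon (i :: l) = Finsupp.single (i, 1) 1 + Ymon l := by
  simp [Ymon]

lemma monomial_Ymon_cons (i : Fin N) (l : List (Fin N)) :
    monomial (Ymon (i :: l)) (1 : K) = YY K N i * monomial (Ymon l) 1 := by
  rw [Ymon_cons, YY, X, monomial_mul, one_mul]

lemma FF_singleton (i : Fin N) : FF K N [i] = XX K N i := by
  rw [FF]

lemma FF_pair (i j : Fin N) : FF K N [i, j] = XX K N i * YY K N j - XX K N j * YY K N i := by
  rw [FF]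

lemma FF_cons_cons_cons (i₁ i₂ i₃ : Fin N) (l : List (Fin N)) :
    FF K N (i₁ :: i₂ :: i₃ :: l) =
      FF K N (i₂ :: l) * Gpair K N i₁ i₃ - FF K N (i₁ :: l) * Gpair K N i₂ i₃ := by
  rw [FF]

lemma FF_pair_mul_monomial (a c : Fin N) (U : (Fin N × Fin 3) →₀ ℕ) :
    FF K N [a, c] * monomial U 1 =
      monomial (Finsupp.single (a, 0) 1 + Finsupp.single (c, 1) 1 + U) 1
        - monomial (Finsupp.single (a, 1) 1 + Finsupp.single (c, 0) 1 + U) 1 := by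
  simp only [FF_pair, XX, YY, X, monomial_mul, sub_mul, mul_one]
  rw [add_comm (Finsupp.single (c, 0) 1)]

lemma XX_mul_Gpair_sub_XX_mul_Gpair (a c b : Fin N) :
    XX K N c * Gpair K N a b - XX K N a * Gpair K N c b =
      FF K N [a, c] * YY K N b + XX K N b * (XX K N c * ZZ K N a - XX K N a * ZZ K N c) := by
  rw [FF_pair, Gpair, Gpair]
  ring

lemma X_mem_supported_lowVars {i j : Fin N} (h : i < j) (s t : Fin 3) :
    (X (i, s) : MvPolynomial (Fin N × Fin 3) K) ∈ supported K (lowVars (rankVar (j, t))) :=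
  X_mem_supported.mpr (rankVar_lt_of_fst_lt h s t)

lemma X_fst_mem_supported_lowVars (i : Fin N) :
    (X (i, 0) : MvPolynomial (Fin N × Fin 3) K) ∈ supported K (lowVars (rankVar (i, 1))) :=
  X_mem_supported.mpr (rankVar_fst_lt_snd i)

lemma Gpair_mem_supported_lowVars {i j x : Fin N} (hi : i < x) (hj : j < x) (t : Fin 3) :
    Gpair K N i j ∈ supported K (lowVars (rankVar (x, t))) := by
  unfold Gpair XX YY ZZ
  apply_rules [Subalgebra.add_mem, Subalgebra.sub_mem, Subalgebra.mul_mem, X_mem_supported_lowVars]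

lemma monomialsLT_XX_mul_minor_mul_monomial {a c b : Fin N} (hab : a < b) (hcb : c < b)
    (U : (Fin N × Fin 3) →₀ ℕ) :
    MonomialsLT (XX K N b * (XX K N c * ZZ K N a - XX K N a * ZZ K N c) * monomial U 1)
      (Finsupp.single (a, 1) 1 + Finsupp.single (c, 0) 1 + (Finsupp.single (b, 1) 1 + U)) := by
  have hX {i : Fin N} (h : i < b) (s : Fin 3) := X_mem_supported_lowVars (K := K) h s 1
  exact monomialsLT_mul_monomial
    (mul_mem (X_fst_mem_supported_lowVars b)
      (sub_mem (mul_mem (hX hcb 0) (hX hab 2)) (mul_mem (hX hab 0) (hX hcb 2))))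
    (add_mem (single_mem_supported_lowVars hab _ _) (single_mem_supported_lowVars hcb _ _)) U 1

lemma monomialsLT_XX_mul_Gpair_sub_mul_monomial {a c b d : Fin N} (had : a < d) (hcd : c < d)
    (hbd : b < d) (U : (Fin N × Fin 3) →₀ ℕ) :
    MonomialsLT
      (XX K N d * (YY K N c * Gpair K N a b - YY K N a * Gpair K N c b) * monomial U 1)
      (Finsupp.single (a, 1) 1 + Finsupp.single (c, 0) 1 + Finsupp.single (b, 1) 1
        + (Finsupp.single (d, 1) 1 + U)) := by
  have hY {i : Fin N} (h : i < d) := X_mem_supported_lowVars (K := K) h 1 1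
  exact monomialsLT_mul_monomial
    (mul_mem (X_fst_mem_supported_lowVars d)
      (sub_mem (mul_mem (hY hcd) (Gpair_mem_supported_lowVars had hbd 1))
        (mul_mem (hY had) (Gpair_mem_supported_lowVars hcd hbd 1))))
    (add_mem (add_mem (single_mem_supported_lowVars had _ _)
      (single_mem_supported_lowVars hcd _ _)) (single_mem_supported_lowVars hbd _ _)) U 1

theorem exists_FF_eq_FF_pair_mul_add : ∀ (a c : Fin N) (r : List (Fin N)),
    (a :: c :: r).Pairwise (· < ·) →
    ∃ q, FF K N (a :: c :: r) = FF K N [a, c] * monomial (Ymon r) 1 + q ∧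
      MonomialsLT q (Finsupp.single (a, 1) 1 + Finsupp.single (c, 0) 1 + Ymon r)
  | a, c, [], _ => ⟨0, by simp [Ymon], fun m hm => by simp at hm⟩
  | a, c, [b], h => by
    have lt {x y : Fin N} (hxy : [x, y].Sublist [a, c, b]) : x < y :=
      List.pairwise_pair.mp (h.sublist hxy)
    refine ⟨_, ?_,
      Ymon_cons b [] ▸ monomialsLT_XX_mul_minor_mul_monomial (lt (by simp)) (lt (by simp)) _⟩
    rw [FF_cons_cons_cons, FF_singleton, FF_singleton, monomial_Ymon_cons,
      show Ymon ([] : List (Fin N)) = 0 from rfl, ← one_def, XX_mul_Gpair_sub_XX_mul_Gpair]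
    ring
  | a, c, b :: d :: r, h => by
    have lt {x y : Fin N} (hxy : [x, y].Sublist (a :: c :: b :: d :: r)) : x < y :=
      List.pairwise_pair.mp (h.sublist hxy)
    have had : a < d := lt (by simp)
    have hcd : c < d := lt (by simp)
    have hbd : b < d := lt (by simp)
    obtain ⟨qc, hqc, hqc_lt⟩ := exists_FF_eq_FF_pair_mul_add c d r (h.sublist (by simp))
    obtain ⟨qa, hqa, hqa_lt⟩ := exists_FF_eq_FF_pair_mul_add a d r (h.sublist (by simp))
    refine ⟨XX K N b * (XX K N c * ZZ K N a - XX K N a * ZZ K N c) * monomial (Ymon (d :: r)) 1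
        - XX K N d * (YY K N c * Gpair K N a b - YY K N a * Gpair K N c b) * monomial (Ymon r) 1
        + (qc * Gpair K N a b - qa * Gpair K N c b), ?_, ?_⟩
    · rw [FF_cons_cons_cons, hqc, hqa, monomial_Ymon_cons b, monomial_Ymon_cons d]
      simp only [FF_pair, Gpair]
      ring
    · have hd0 : Finsupp.single (d, 0) 1 ∈ Finsupp.supported ℕ ℕ (lowVars (rankVar (d, 1))) :=
        Finsupp.single_mem_supported ℕ 1 (rankVar_fst_lt_snd d)
      have hL : Finsupp.single (a, 1) 1 + Finsupp.single (c, 0) 1 + Finsupp.single (b, 1) 1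
          ∈ Finsupp.supported ℕ ℕ (lowVars (rankVar (d, 1))) :=
        add_mem (add_mem (single_mem_supported_lowVars had _ _)
          (single_mem_supported_lowVars hcd _ _)) (single_mem_supported_lowVars hbd _ _)
      rw [Ymon_cons b]
      refine ((monomialsLT_XX_mul_minor_mul_monomial (lt (by simp)) (lt (by simp)) _).sub ?_).add
        ?_ <;> rw [Ymon_cons d, ← add_assoc]
      · exact monomialsLT_XX_mul_Gpair_sub_mul_monomial had hcd hbd _
      · exact (hqc_lt.mul_of_mem_supported (Gpair_mem_supported_lowVars had hbd 1)
          (add_mem (single_mem_supported_lowVars hcd _ _) hd0) hL).sub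
          (hqa_lt.mul_of_mem_supported (Gpair_mem_supported_lowVars hcd hbd 1)
          (add_mem (single_mem_supported_lowVars had _ _) hd0) hL)

end FF

theorem FF_leading_terms_general (K : Type) [Field K] (N : ℕ)
    (a c : Fin N) (rest : List (Fin N))
    (hchain : (a :: c :: rest).Chain' (· < ·)) :
    MvPolynomial.coeff
        (Finsupp.single ((a, 0) : Fin N × Fin 3) 1 + Finsupp.single ((c, 1) : Fin N × Fin 3) 1
          + Ymon rest) (FF K N (a :: c :: rest)) = 1 ∧
    MvPolynomial.coeff
        (Finsupp.single ((a, 1) : Fin N × Fin 3) 1 + Finsupp.single ((c, 0) : Fin N × Fin 3) 1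
          + Ymon rest) (FF K N (a :: c :: rest)) = -1 ∧
    monLT (Finsupp.single ((a, 1) : Fin N × Fin 3) 1 + Finsupp.single ((c, 0) : Fin N × Fin 3) 1
            + Ymon rest)
          (Finsupp.single ((a, 0) : Fin N × Fin 3) 1 + Finsupp.single ((c, 1) : Fin N × Fin 3) 1
            + Ymon rest) ∧
    ∀ m ∈ (FF K N (a :: c :: rest)).support,
      m ≠ Finsupp.single ((a, 0) : Fin N × Fin 3) 1 + Finsupp.single ((c, 1) : Fin N × Fin 3) 1
            + Ymon rest →
      m ≠ Finsupp.single ((a, 1) : Fin N × Fin 3) 1 + Finsupp.single ((c, 0) : Fin N × Fin 3) 1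
            + Ymon rest →
      monLT m (Finsupp.single ((a, 1) : Fin N × Fin 3) 1
                + Finsupp.single ((c, 0) : Fin N × Fin 3) 1 + Ymon rest) := by
  have hsorted := List.isChain_iff_pairwise.mp hchain
  have hac : a < c := List.pairwise_pair.mp (hsorted.sublist (by simp))
  obtain ⟨q, hF, hq⟩ := exists_FF_eq_FF_pair_mul_add (K := K) a c rest hsorted
  rw [FF_pair_mul_monomial] at hF
  have h₂₁ := monLT_pair_add hac (Ymon rest)
  obtain ⟨h₁, h₂, hlower⟩ := coeff_of_eq_monomial_sub_monomial_add hF h₂₁ hq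
  exact ⟨h₁, h₂, h₂₁, hlower⟩

/-- with the lex order Z_N > Y_N > X_N > ⋯ > Z₁ > Y₁ > X₁, for
i₁ < i₂ < ⋯ < i_t (t ≥ 2, here l = a :: c :: rest),
F_l = X_{i₁} Y_{i₂} ⋯ Y_{i_t} - Y_{i₁} X_{i₂} Y_{i₃} ⋯ Y_{i_t} + lower order terms;
in particular the leading monomial of F_l is X_{i₁} Y_{i₂} ⋯ Y_{i_t}. -/
theorem FF_leading_terms (K : Type) [Field K] [CharZero K] (N : ℕ)
    (a c : Fin N) (rest : List (Fin N))
    (hchain : (a :: c :: rest).Chain' (· < ·)) :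
    MvPolynomial.coeff
        (Finsupp.single ((a, 0) : Fin N × Fin 3) 1 + Finsupp.single ((c, 1) : Fin N × Fin 3) 1
          + Ymon rest) (FF K N (a :: c :: rest)) = 1 ∧
    MvPolynomial.coeff
        (Finsupp.single ((a, 1) : Fin N × Fin 3) 1 + Finsupp.single ((c, 0) : Fin N × Fin 3) 1
          + Ymon rest) (FF K N (a :: c :: rest)) = -1 ∧
    monLT (Finsupp.single ((a, 1) : Fin N × Fin 3) 1 + Finsupp.single ((c, 0) : Fin N × Fin 3) 1
            + Ymon rest)
          (Finsupp.single ((a, 0) : Fin N × Fin 3) 1 + Finsupp.single ((c, 1) : Fin N × Fin 3) 1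
            + Ymon rest) ∧
    ∀ m ∈ (FF K N (a :: c :: rest)).support,
      m ≠ Finsupp.single ((a, 0) : Fin N × Fin 3) 1 + Finsupp.single ((c, 1) : Fin N × Fin 3) 1
            + Ymon rest →
      m ≠ Finsupp.single ((a, 1) : Fin N × Fin 3) 1 + Finsupp.single ((c, 0) : Fin N × Fin 3) 1
            + Ymon rest →
      monLT m (Finsupp.single ((a, 1) : Fin N × Fin 3) 1
                + Finsupp.single ((c, 0) : Fin N × Fin 3) 1 + Ymon rest) :=
  FF_leading_terms_general K N a c rest hchain
end
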